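/- arXiv:0909.1142 — 2 statements merged into one kernel-verified Lean document; each statement's English description precedes it below -/
import Mathlib

section
/- Let a < b and let g : ℝ → ℝ be twice differentiable on an open interval containing [a,b], with g(a) = g(b) = 0 and g'(a) = g'(b) = 0. If there exist x₁, x₂ ∈ (a,b) with g(x₁) > 0 and g(x₂) < 0, then there exist points t₁ < t₂ < t₃ in (a,b) such that g''(t₁)·g''(t₂) < 0 and g''(t₂)·g''(t₃) < 0 (i.e., the second derivative changes sign at least twice, taking three alternating signs). -/
lemma slope_pt {f : ℝ → ℝ} {u v : ℝ} (huv : u < v)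
    (hd : ∀ x ∈ Set.Icc u v, DifferentiableAt ℝ f x) :
    ∃ p ∈ Set.Ioo u v, deriv f p = (f v - f u) / (v - u) :=
  exists_deriv_eq_slope f huv
    (fun x hx => (hd x hx).continuousAt.continuousWithinAt)
    (fun x hx => (hd x (Set.Ioo_subset_Icc_self hx)).differentiableWithinAt)

lemma slope_pos {f : ℝ → ℝ} {u v : ℝ} (huv : u < v)
    (hd : ∀ x ∈ Set.Icc u v, DifferentiableAt ℝ f x) (hfv : f u < f v) :
    ∃ p ∈ Set.Ioo u v, 0 < deriv f p := by
  obtain ⟨p, hp, hp'⟩ := slope_pt huv hd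
  exact ⟨p, hp, hp' ▸ div_pos (sub_pos.2 hfv) (sub_pos.2 huv)⟩

lemma slope_neg' {f : ℝ → ℝ} {u v : ℝ} (huv : u < v)
    (hd : ∀ x ∈ Set.Icc u v, DifferentiableAt ℝ f x) (hfv : f v < f u) :
    ∃ p ∈ Set.Ioo u v, deriv f p < 0 := by
  obtain ⟨p, hp, hp'⟩ := slope_pt huv hd
  exact ⟨p, hp, hp' ▸ div_neg_of_neg_of_pos (by linarith) (sub_pos.2 huv)⟩

lemma aux_ordered
    (a b : ℝ) (hab : a < b) (g : ℝ → ℝ)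
    (hdiff : ∃ c d : ℝ, c < a ∧ b < d ∧
      ∀ x ∈ Set.Ioo c d, DifferentiableAt ℝ g x ∧ DifferentiableAt ℝ (deriv g) x)
    (hga : g a = 0) (hgb : g b = 0)
    (hg'a : deriv g a = 0) (hg'b : deriv g b = 0)
    (x₁ x₂ : ℝ) (h12 : x₁ < x₂) (hx₁ : x₁ ∈ Set.Ioo a b) (hx₂ : x₂ ∈ Set.Ioo a b)
    (hgx₁ : g x₁ > 0) (hgx₂ : g x₂ < 0) :
    ∃ t₁ t₂ t₃ : ℝ, t₁ ∈ Set.Ioo a b ∧ t₂ ∈ Set.Ioo a b ∧ t₃ ∈ Set.Ioo a b ∧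
      t₁ < t₂ ∧ t₂ < t₃ ∧
      deriv (deriv g) t₁ * deriv (deriv g) t₂ < 0 ∧
      deriv (deriv g) t₂ * deriv (deriv g) t₃ < 0 := by
  obtain ⟨c, d, hc, hd, hcd⟩ := hdiff
  have hsub : ∀ u v : ℝ, a ≤ u → v ≤ b → Set.Icc u v ⊆ Set.Ioo c d := by
    intro u v hu hv x hx
    exact ⟨lt_of_lt_of_le hc (hu.trans hx.1), lt_of_le_of_lt (hx.2.trans hv) hd⟩
  have hdg : ∀ u v : ℝ, a ≤ u → v ≤ b → ∀ x ∈ Set.Icc u v, DifferentiableAt ℝ g x :=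
    fun u v hu hv x hx => (hcd x (hsub u v hu hv hx)).1
  have hdg' : ∀ u v : ℝ, a ≤ u → v ≤ b → ∀ x ∈ Set.Icc u v, DifferentiableAt ℝ (deriv g) x :=
    fun u v hu hv x hx => (hcd x (hsub u v hu hv hx)).2
  -- first derivative sign points
  obtain ⟨p₁, hp₁, hp₁'⟩ := slope_pos hx₁.1 (hdg a x₁ le_rfl hx₁.2.le) (by rw [hga]; exact hgx₁)
  obtain ⟨p₂, hp₂, hp₂'⟩ := slope_neg' h12 (hdg x₁ x₂ hx₁.1.le hx₂.2.le) (hgx₂.trans hgx₁)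
  obtain ⟨p₃, hp₃, hp₃'⟩ := slope_pos hx₂.2 (hdg x₂ b hx₂.1.le le_rfl) (by rw [hgb]; exact hgx₂)
  -- second derivative sign points
  obtain ⟨q₁, hq₁, hq₁'⟩ := slope_pos hp₁.1
    (hdg' a p₁ le_rfl (hp₁.2.trans hx₁.2).le) (by rw [hg'a]; exact hp₁')
  obtain ⟨q₂, hq₂, hq₂'⟩ := slope_neg' (hp₁.2.trans hp₂.1)
    (hdg' p₁ p₂ hp₁.1.le (hp₂.2.trans hx₂.2).le) (hp₂'.trans hp₁')
  obtain ⟨q₃, hq₃, hq₃'⟩ := slope_pos (hp₂.2.trans hp₃.1)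
    (hdg' p₂ p₃ (hx₁.1.trans hp₂.1).le hp₃.2.le) (hp₂'.trans hp₃')
  refine ⟨q₁, q₂, q₃,
    ⟨hq₁.1, hq₁.2.trans (hp₁.2.trans hx₁.2)⟩,
    ⟨hp₁.1.trans hq₂.1, hq₂.2.trans (hp₂.2.trans hx₂.2)⟩,
    ⟨hx₁.1.trans (hp₂.1.trans hq₃.1), hq₃.2.trans hp₃.2⟩,
    hq₁.2.trans hq₂.1, hq₂.2.trans hq₃.1,
    mul_neg_of_pos_of_neg hq₁' hq₂', mul_neg_of_neg_of_pos hq₂' hq₃'⟩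

/-- If `g` is twice differentiable on an open interval containing `[a,b]`, vanishes to first
order at both endpoints (`g(a) = g(b) = 0`, `g'(a) = g'(b) = 0`), and takes both strict signs
inside `(a,b)`, then its second derivative changes sign at least twice in `(a,b)`. -/
theorem second_deriv_changes_sign_twice
    (a b : ℝ) (hab : a < b) (g : ℝ → ℝ)
    (hdiff : ∃ c d : ℝ, c < a ∧ b < d ∧
      ∀ x ∈ Set.Ioo c d, DifferentiableAt ℝ g x ∧ DifferentiableAt ℝ (deriv g) x)
    (hga : g a = 0) (hgb : g b = 0)
    (hg'a : deriv g a = 0) (hg'b : deriv g b = 0)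
    (x₁ : ℝ) (hx₁ : x₁ ∈ Set.Ioo a b) (hgx₁ : g x₁ > 0)
    (x₂ : ℝ) (hx₂ : x₂ ∈ Set.Ioo a b) (hgx₂ : g x₂ < 0) :
    ∃ t₁ t₂ t₃ : ℝ, t₁ ∈ Set.Ioo a b ∧ t₂ ∈ Set.Ioo a b ∧ t₃ ∈ Set.Ioo a b ∧
      t₁ < t₂ ∧ t₂ < t₃ ∧
      deriv (deriv g) t₁ * deriv (deriv g) t₂ < 0 ∧
      deriv (deriv g) t₂ * deriv (deriv g) t₃ < 0 := by
  rcases lt_trichotomy x₁ x₂ with h | h | h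
  · exact aux_ordered a b hab g hdiff hga hgb hg'a hg'b x₁ x₂ h hx₁ hx₂ hgx₁ hgx₂
  · exact absurd (h ▸ hgx₁) (not_lt.2 hgx₂.le)
  · -- apply to -g
    have hneg : deriv (fun x => -g x) = fun x => -deriv g x := by
      funext x; exact deriv.neg
    have hneg2 : ∀ x, deriv (deriv (fun x => -g x)) x = -deriv (deriv g) x := by
      intro x; rw [hneg]; exact deriv.neg
    obtain ⟨t₁, t₂, t₃, h₁, h₂, h₃, h₁₂, h₂₃, hm₁, hm₂⟩ :=
      aux_ordered a b hab (fun x => -g x)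
        (by
          obtain ⟨c, d, hc, hd, hcd⟩ := hdiff
          refine ⟨c, d, hc, hd, fun x hx => ⟨(hcd x hx).1.neg, ?_⟩⟩
          rw [hneg]; exact (hcd x hx).2.neg)
        (by simp [hga]) (by simp [hgb])
        (by rw [hneg]; simp [hg'a]) (by rw [hneg]; simp [hg'b])
        x₂ x₁ h hx₂ hx₁ (by simpa using hgx₂) (by simpa using hgx₁)
    simp only [hneg2, neg_mul_neg] at hm₁ hm₂
    exact ⟨t₁, t₂, t₃, h₁, h₂, h₃, h₁₂, h₂₃, hm₁, hm₂⟩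
end

section
/- Let 0 < a < b, let Θ, A, B, γ₁, γ₂, c₀, c₁, c₂ ∈ ℝ with γ₁ ≠ γ₂, and define φ(x) = Ax^{γ₁} + Bx^{γ₂} + c₂x² + c₁x + c₀ for x > 0. Suppose φ(a) = φ(b) = Θ, φ'(a) = φ'(b) = 0, and there exists α ∈ (a,b) with φ(α) < Θ. Then φ(x) ≤ Θ for every x ∈ [a,b]. -/
/-!
If `φ` exceeded `Θ` somewhere in `[a, b]`, then, since also `φ(α) < Θ`, the function `φ - Θ`
would vanish at some interior point as well as at `a` and `b`, and Rolle's theorem would give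
two interior zeros of `φ'` besides the zeros `a` and `b`. But `φ'` is a generalized polynomial
with four terms `x^{γ₁-1}, x^{γ₂-1}, x, 1`, and such a function with four positive zeros vanishes
identically (by induction on the number of terms, as in Descartes' rule of signs).
Then `φ` is constant on `(0, ∞)`, contradicting `φ(α) < Θ = φ(a)`.
-/

open Set

theorem IsOpen.eq_of_hasDerivAt_eq_zero {s : Set ℝ} (hs : IsOpen s) (hs' : IsPreconnected s)
    {f f' : ℝ → ℝ} (hf : ∀ x ∈ s, HasDerivAt f (f' x) x) (hf' : ∀ x ∈ s, f' x = 0)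
    {x y : ℝ} (hx : x ∈ s) (hy : y ∈ s) : f x = f y :=
  hs.is_const_of_deriv_eq_zero hs' (fun t ht => (hf t ht).differentiableAt.differentiableWithinAt)
    (fun t ht => by rw [(hf t ht).deriv, hf' t ht, Pi.zero_apply]) hx hy

theorem exists_strictMono_deriv_eq_zero_of_strictMono {f f' : ℝ → ℝ} {n : ℕ}
    {z : Fin (n + 1) → ℝ} (hz : StrictMono z)
    (hf : ∀ x ∈ Icc (z 0) (z (Fin.last n)), HasDerivAt f (f' x) x) (hfz : ∀ i, f (z i) = 0) :
    ∃ w : Fin n → ℝ, StrictMono w ∧ (∀ i, w i ∈ Ioo (z i.castSucc) (z i.succ)) ∧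
      ∀ i, f' (w i) = 0 := by
  have hIcc : ∀ i : Fin n, Icc (z i.castSucc) (z i.succ) ⊆ Icc (z 0) (z (Fin.last n)) :=
    fun i => Icc_subset_Icc (hz.monotone (Fin.zero_le _)) (hz.monotone (Fin.le_last _))
  have hrolle : ∀ i : Fin n, ∃ w ∈ Ioo (z i.castSucc) (z i.succ), f' w = 0 := fun i =>
    exists_hasDerivAt_eq_zero (hz Fin.castSucc_lt_succ)
      (fun x hx => (hf x (hIcc i hx)).continuousAt.continuousWithinAt)
      (by rw [hfz, hfz]) (fun x hx => hf x (hIcc i (Ioo_subset_Icc_self hx)))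
  choose w hw hfw using hrolle
  refine ⟨w, fun i j hij => ?_, hw, hfw⟩
  calc w i < z i.succ := (hw i).2
    _ ≤ z j.castSucc := hz.monotone (Fin.succ_le_castSucc_iff.mpr hij)
    _ < w j := (hw j).1

theorem Real.hasDerivAt_sum_mul_rpow {ι : Type*} [Fintype ι] (c e : ι → ℝ) {x : ℝ}
    (hx : x ≠ 0) :
    HasDerivAt (fun x => ∑ j, c j * x ^ e j) (∑ j, c j * e j * x ^ (e j - 1)) x := by
  simpa only [mul_assoc] using HasDerivAt.fun_sum fun j _ =>
    (Real.hasDerivAt_rpow_const (p := e j) (Or.inl hx)).const_mul (c j)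

theorem Real.sum_mul_rpow_eq_zero_of_strictMono {n : ℕ} {c e z : Fin n → ℝ}
    (hz : StrictMono z) (hz₀ : ∀ i, 0 < z i) (hroot : ∀ i, ∑ j, c j * z i ^ e j = 0)
    {x : ℝ} (hx : 0 < x) : ∑ j, c j * x ^ e j = 0 := by
  induction n generalizing x with
  | zero => simp
  | succ n ih =>
    -- Divide by `x ^ e 0` and apply the induction hypothesis to the derivative of the quotient.
    set g : ℝ → ℝ := fun x => ∑ j, c j * x ^ (e j - e 0) with hg
    have hfactor : ∀ y : ℝ, 0 < y → ∑ j, c j * y ^ e j = y ^ e 0 * g y := fun y hy => by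
      simp only [hg, Finset.mul_sum, mul_left_comm (y ^ e 0), ← Real.rpow_add hy,
        add_sub_cancel]
    have hg_root : ∀ i, g (z i) = 0 := fun i => by
      have h := hroot i
      rwa [hfactor _ (hz₀ i), mul_eq_zero, or_iff_right (Real.rpow_pos_of_pos (hz₀ i) _).ne']
        at h
    have hg_deriv : ∀ y ∈ Ioi (0 : ℝ), HasDerivAt g
        (∑ j : Fin n, c j.succ * (e j.succ - e 0) * y ^ (e j.succ - e 0 - 1)) y := by
      intro y hy
      convert Real.hasDerivAt_sum_mul_rpow c (e · - e 0) (ne_of_gt hy) using 1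
      simp [Fin.sum_univ_succ]
    obtain ⟨w, hw_mono, hw, hg'w⟩ := exists_strictMono_deriv_eq_zero_of_strictMono hz
      (fun y hy => hg_deriv y ((hz₀ 0).trans_le hy.1)) hg_root
    have hg' : ∀ y ∈ Ioi (0 : ℝ),
        ∑ j : Fin n, c j.succ * (e j.succ - e 0) * y ^ (e j.succ - e 0 - 1) = 0 :=
      fun y hy => ih hw_mono (fun i => (hz₀ _).trans (hw i).1) hg'w hy
    rw [hfactor x hx, isOpen_Ioi.eq_of_hasDerivAt_eq_zero isPreconnected_Ioi hg_deriv hg' hx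
      (hz₀ 0), hg_root, mul_zero]

theorem exists_two_deriv_eq_zero_of_lt_of_lt {f f' : ℝ → ℝ} {a b x y : ℝ}
    (hf : ∀ t ∈ Icc a b, HasDerivAt f (f' t) t) (hfab : f a = f b)
    (hx : x ∈ Icc a b) (hy : y ∈ Icc a b) (hfx : f x < f a) (hfy : f a < f y) :
    ∃ r₁ r₂, a < r₁ ∧ r₁ < r₂ ∧ r₂ < b ∧ f' r₁ = 0 ∧ f' r₂ = 0 := by
  have hcont : ContinuousOn f (Icc a b) := fun t ht =>
    (hf t ht).continuousAt.continuousWithinAt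
  obtain ⟨z, hz, hfz⟩ : ∃ z ∈ Ioo a b, f z = f a := by
    rcases lt_or_gt_of_ne (ne_of_apply_ne f (hfx.trans hfy).ne) with hxy | hyx
    · obtain ⟨z, hz, hfz⟩ :=
        intermediate_value_Ioo hxy.le (hcont.mono (Icc_subset_Icc hx.1 hy.2)) ⟨hfx, hfy⟩
      exact ⟨z, Ioo_subset_Ioo hx.1 hy.2 hz, hfz⟩
    · obtain ⟨z, hz, hfz⟩ :=
        intermediate_value_Ioo' hyx.le (hcont.mono (Icc_subset_Icc hy.1 hx.2)) ⟨hfx, hfy⟩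
      exact ⟨z, Ioo_subset_Ioo hy.1 hx.2 hz, hfz⟩
  obtain ⟨r₁, hr₁, h₁⟩ := exists_hasDerivAt_eq_zero hz.1
    (hcont.mono (Icc_subset_Icc_right hz.2.le)) hfz.symm
    (fun t ht => hf t ⟨ht.1.le, ht.2.le.trans hz.2.le⟩)
  obtain ⟨r₂, hr₂, h₂⟩ := exists_hasDerivAt_eq_zero hz.2
    (hcont.mono (Icc_subset_Icc_left hz.1.le)) (hfz.trans hfab)
    (fun t ht => hf t ⟨hz.1.le.trans ht.1.le, ht.2.le⟩)
  exact ⟨r₁, r₂, hr₁.1, hr₁.2.trans hr₂.1, hr₂.2, h₁, h₂⟩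

theorem hasDerivAt_rpow_add_rpow_add_quadratic (A B γ₁ γ₂ c₀ c₁ c₂ : ℝ) {x : ℝ} (hx : 0 < x) :
    HasDerivAt (fun x : ℝ => A * x ^ γ₁ + B * x ^ γ₂ + c₂ * x ^ 2 + c₁ * x + c₀)
      (∑ j, ![A * γ₁, B * γ₂, 2 * c₂, c₁] j * x ^ ![γ₁ - 1, γ₂ - 1, 1, 0] j) x := by
  have h := Real.hasDerivAt_sum_mul_rpow ![A, B, c₂, c₁, c₀] ![γ₁, γ₂, 2, 1, 0] hx.ne'
  simp only [Fin.sum_univ_five, Fin.sum_univ_four, Matrix.cons_val] at h ⊢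
  refine (h.congr_of_eventuallyEq (.of_eq ?_)).congr_deriv ?_
  · funext y
    simp only [Real.rpow_two, Real.rpow_one, Real.rpow_zero, mul_one]
  · rw [show (2 : ℝ) - 1 = 1 by norm_num, sub_self, Real.rpow_one, Real.rpow_zero]
    ring

theorem candidate_value_function_le_theta_general
    (a b Θ A B γ₁ γ₂ c₀ c₁ c₂ : ℝ) (ha : 0 < a) (hab : a < b)
    (φ : ℝ → ℝ)
    (hφ : ∀ x : ℝ, x > 0 → φ x = A * x ^ γ₁ + B * x ^ γ₂ + c₂ * x^2 + c₁ * x + c₀)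
    (hφa : φ a = Θ) (hφb : φ b = Θ)
    (hφ'a : deriv φ a = 0) (hφ'b : deriv φ b = 0)
    (α : ℝ) (hα : α ∈ Set.Ioo a b) (hφα : φ α < Θ) :
    ∀ x ∈ Set.Icc a b, φ x ≤ Θ := by
  intro x hx
  by_contra! hΘx
  set φ' : ℝ → ℝ :=
    fun t => ∑ j, ![A * γ₁, B * γ₂, 2 * c₂, c₁] j * t ^ ![γ₁ - 1, γ₂ - 1, 1, 0] j
  have hφ' : ∀ t ∈ Ioi (0 : ℝ), HasDerivAt φ (φ' t) t := fun t ht =>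
    (hasDerivAt_rpow_add_rpow_add_quadratic A B γ₁ γ₂ c₀ c₁ c₂ ht).congr_of_eventuallyEq
      (Filter.eventuallyEq_of_mem (Ioi_mem_nhds ht) hφ)
  obtain ⟨r₁, r₂, har₁, hr₁₂, hr₂b, hr₁, hr₂⟩ := exists_two_deriv_eq_zero_of_lt_of_lt
    (fun t ht => hφ' t (ha.trans_le ht.1)) (hφa.trans hφb.symm) (Ioo_subset_Icc_self hα) hx
    (hφa ▸ hφα) (hφa ▸ hΘx)
  have hroots : ∀ i, φ' (![a, r₁, r₂, b] i) = 0 := by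
    rw [(hφ' a ha).deriv] at hφ'a
    rw [(hφ' b (ha.trans hab)).deriv] at hφ'b
    simp only [Fin.forall_fin_succ, Matrix.cons_val, IsEmpty.forall_iff]
    exact ⟨hφ'a, hr₁, hr₂, hφ'b, trivial⟩
  have hφ'_zero : ∀ t ∈ Ioi (0 : ℝ), φ' t = 0 := fun t ht =>
    Real.sum_mul_rpow_eq_zero_of_strictMono (z := ![a, r₁, r₂, b])
      (by simp [har₁, hr₁₂, hr₂b])
      (by simp [Fin.forall_fin_succ, ha, ha.trans har₁, ha.trans (har₁.trans hr₁₂),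
        ha.trans hab])
      hroots ht
  have hφαa : φ α = φ a := isOpen_Ioi.eq_of_hasDerivAt_eq_zero isPreconnected_Ioi hφ'
    hφ'_zero (ha.trans hα.1) ha
  linarith

/-- Verification of the second quasi-variational inequality: the candidate value function
`φ(x) = Ax^{γ₁} + Bx^{γ₂} + c₂x² + c₁x + c₀` with `φ(a) = φ(b) = Θ`, `φ'(a) = φ'(b) = 0`
and `φ(α) < Θ` for some `α ∈ (a,b)` satisfies `φ ≤ Θ` on all of `[a,b]`. -/
theorem candidate_value_function_le_theta
    (a b Θ A B γ₁ γ₂ c₀ c₁ c₂ : ℝ) (ha : 0 < a) (hab : a < b) (hγ : γ₁ ≠ γ₂)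
    (φ : ℝ → ℝ)
    (hφ : ∀ x : ℝ, x > 0 → φ x = A * x ^ γ₁ + B * x ^ γ₂ + c₂ * x^2 + c₁ * x + c₀)
    (hφa : φ a = Θ) (hφb : φ b = Θ)
    (hφ'a : deriv φ a = 0) (hφ'b : deriv φ b = 0)
    (α : ℝ) (hα : α ∈ Set.Ioo a b) (hφα : φ α < Θ) :
    ∀ x ∈ Set.Icc a b, φ x ≤ Θ :=
  candidate_value_function_le_theta_general a b Θ A B γ₁ γ₂ c₀ c₁ c₂ ha hab φ hφ hφa hφb hφ'a hφ'b α
    hα hφα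
end
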